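/- arXiv:1509.09112 — 4 statements merged into one kernel-verified Lean document; each statement's English description precedes it below -/
import Mathlib

section
/- Let N ≥ 2 be an integer, α > 0 and t > 1. Then for every β > t there exists a constant C = C(β, t) > 0 such that for all s ∈ ℝ, ( e^{α|s|^{N/(N−1)}} − S_{N−2}(α, s) )^t ≤ C ( e^{βα|s|^{N/(N−1)}} − S_{N−2}(βα, s) ). -/
open MeasureTheory Real Filter Metric

/-- `S_{N-2}(α, s) := ∑_{k=0}^{N-2} (α^k / k!) |s|^{Nk/(N-1)}`. -/
noncomputable def SN (N : ℕ) (α s : ℝ) : ℝ :=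
  ∑ k ∈ Finset.range (N - 1), α ^ k / (Nat.factorial k) *
    |s| ^ (((N : ℝ) * k) / ((N : ℝ) - 1))

/-!
Writing `g_m(x) = eˣ - ∑_{k<m} xᵏ/k! = ∑_{j ≥ 0} x^{j+m}/(j+m)!`, the left-hand side is
`g_{N-1}(x)ᵗ` and the right-hand side `C g_{N-1}(βx)` with `x = α|s|^{N/(N-1)}`.
Since `g_m(x) ≤ eˣ` and, termwise, `g_m(x) ≤ (xᵐ/m!) eˣ`, we get `g_m(x)ᵗ ≤ (xᵐ/m!) e^{tx}`.
Expanding `e^{tx}`, the `j`-th term of this series is `binom(j+m, m) (t/β)ʲ β^{-m}` times the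
`j`-th term `(βx)^{j+m}/(j+m)!` of `g_m(βx)`, and the binomial-geometric coefficients are
bounded by their sum `(1 - t/β)^{-(m+1)}`.
-/

open Finset Nat

noncomputable def expTail (m : ℕ) (x : ℝ) : ℝ :=
  Real.exp x - ∑ k ∈ range m, x ^ k / k !

lemma hasSum_pow_div_factorial_exp (x : ℝ) : HasSum (fun n => x ^ n / n !) (Real.exp x) := by
  rw [Real.exp_eq_exp_ℝ]
  exact NormedSpace.expSeries_div_hasSum_exp x

lemma hasSum_expTail (m : ℕ) (x : ℝ) :
    HasSum (fun j => x ^ (j + m) / (j + m)!) (expTail m x) :=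
  (hasSum_nat_add_iff' m).2 (hasSum_pow_div_factorial_exp x)

lemma pow_div_factorial_mul_pow_div_factorial (m j : ℕ) (a x : ℝ) :
    x ^ m / m ! * ((a * x) ^ j / j !) = (j + m).choose m * a ^ j * (x ^ (j + m) / (j + m)!) := by
  have hc : ((j + m).choose m : ℝ) ≠ 0 := by exact_mod_cast (Nat.choose_pos le_add_self).ne'
  rw [← Nat.add_choose_mul_factorial_mul_factorial j m]
  push_cast
  field_simp
  ring

section

variable {m : ℕ} {x : ℝ}

lemma expTail_nonneg (hx : 0 ≤ x) : 0 ≤ expTail m x :=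
  (hasSum_expTail m x).nonneg fun _ => by positivity

lemma expTail_le_exp (hx : 0 ≤ x) : expTail m x ≤ Real.exp x :=
  sub_le_self _ (sum_nonneg fun _ _ => by positivity)

lemma expTail_le_pow_div_factorial_mul_exp (hx : 0 ≤ x) :
    expTail m x ≤ x ^ m / m ! * Real.exp x := by
  refine hasSum_le (fun j => ?_) (hasSum_expTail m x)
    ((hasSum_pow_div_factorial_exp x).mul_left _)
  have h := pow_div_factorial_mul_pow_div_factorial m j 1 x
  rw [one_mul, one_pow, mul_one] at h
  rw [h]
  exact le_mul_of_one_le_left (by positivity) (by exact_mod_cast Nat.choose_pos (le_add_self))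

lemma expTail_rpow_le {t : ℝ} (hx : 0 ≤ x) (ht : 1 ≤ t) :
    expTail m x ^ t ≤ x ^ m / m ! * Real.exp (t * x) := by
  have hg := expTail_nonneg (m := m) hx
  calc expTail m x ^ t = expTail m x ^ (1 : ℝ) * expTail m x ^ (t - 1) := by
        rw [← Real.rpow_add' hg (by linarith), add_sub_cancel]
    _ ≤ (x ^ m / m ! * Real.exp x) * Real.exp x ^ (t - 1) := by
        rw [Real.rpow_one]
        gcongr
        · exact expTail_le_pow_div_factorial_mul_exp hx
        · exact expTail_le_exp hx
    _ = x ^ m / m ! * Real.exp (t * x) := by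
        rw [← Real.exp_mul, mul_assoc, ← Real.exp_add]
        ring_nf

lemma choose_mul_pow_le {r : ℝ} (hr₀ : 0 ≤ r) (hr₁ : r < 1) (j : ℕ) :
    (j + m).choose m * r ^ j ≤ 1 / (1 - r) ^ (m + 1) :=
  le_hasSum (hasSum_choose_mul_geometric_of_norm_lt_one m (by rwa [norm_of_nonneg hr₀])) j
    fun _ _ => by positivity

lemma pow_div_factorial_mul_exp_le_expTail {t β : ℝ} (hx : 0 ≤ x) (ht : 0 ≤ t) (htβ : t < β) :
    x ^ m / m ! * Real.exp (t * x) ≤ 1 / (1 - t / β) ^ (m + 1) / β ^ m * expTail m (β * x) := by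
  have hβ : 0 < β := ht.trans_lt htβ
  refine hasSum_le (fun j => ?_) ((hasSum_pow_div_factorial_exp (t * x)).mul_left _)
    ((hasSum_expTail m (β * x)).mul_left _)
  have hr := choose_mul_pow_le (m := m) (div_nonneg ht hβ.le) ((div_lt_one hβ).2 htβ) j
  rw [pow_div_factorial_mul_pow_div_factorial]
  calc ((j + m).choose m : ℝ) * t ^ j * (x ^ (j + m) / (j + m)!)
      = (j + m).choose m * (t / β) ^ j * β ^ j * (x ^ (j + m) / (j + m)!) := by
        rw [div_pow]
        field_simp
    _ ≤ 1 / (1 - t / β) ^ (m + 1) * β ^ j * (x ^ (j + m) / (j + m)!) := by gcongr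
    _ = 1 / (1 - t / β) ^ (m + 1) / β ^ m * ((β * x) ^ (j + m) / (j + m)!) := by
        field_simp
        ring

end

lemma exists_expTail_rpow_le (m : ℕ) {t β : ℝ} (ht : 1 ≤ t) (htβ : t < β) :
    ∃ C > 0, ∀ x, 0 ≤ x → expTail m x ^ t ≤ C * expTail m (β * x) := by
  have hβ : 0 < β := by linarith
  have hr : 0 < 1 - t / β := sub_pos.2 ((div_lt_one hβ).2 htβ)
  exact ⟨_, by positivity, fun x hx =>
    (expTail_rpow_le hx ht).trans (pow_div_factorial_mul_exp_le_expTail hx (by linarith) htβ)⟩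

lemma exp_sub_SN_eq_expTail (N : ℕ) (γ s : ℝ) :
    Real.exp (γ * |s| ^ ((N : ℝ) / ((N : ℝ) - 1))) - SN N γ s =
      expTail (N - 1) (γ * |s| ^ ((N : ℝ) / ((N : ℝ) - 1))) := by
  refine congrArg _ (sum_congr rfl fun k _ => ?_)
  rw [mul_pow, ← Real.rpow_natCast (|s| ^ _), ← Real.rpow_mul (abs_nonneg s), mul_div_right_comm]
  ring

theorem pow_truncated_exp_le_general (N : ℕ) (α t : ℝ) (hα : 0 < α) (ht : 1 < t) :
    ∀ β > t, ∃ C > 0, ∀ s : ℝ,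
      (Real.exp (α * |s| ^ ((N : ℝ) / ((N : ℝ) - 1))) - SN N α s) ^ t ≤
        C * (Real.exp (β * α * |s| ^ ((N : ℝ) / ((N : ℝ) - 1))) - SN N (β * α) s) := by
  intro β hβ
  obtain ⟨C, hC, hle⟩ := exists_expTail_rpow_le (N - 1) ht.le hβ
  refine ⟨C, hC, fun s => ?_⟩
  rw [exp_sub_SN_eq_expTail, exp_sub_SN_eq_expTail, mul_assoc]
  exact hle _ (by positivity)

theorem pow_truncated_exp_le (N : ℕ) (hN : 2 ≤ N) (α t : ℝ) (hα : 0 < α) (ht : 1 < t) :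
    ∀ β > t, ∃ C > 0, ∀ s : ℝ,
      (Real.exp (α * |s| ^ ((N : ℝ) / ((N : ℝ) - 1))) - SN N α s) ^ t ≤
        C * (Real.exp (β * α * |s| ^ ((N : ℝ) / ((N : ℝ) - 1))) - SN N (β * α) s) :=
  pow_truncated_exp_le_general N α t hα ht
end

section
/- Let N ≥ 2 be an integer, α_0 > 0, and let f : ℝ → ℝ be continuous such that for every α > α_0 one has |f(s)|e^{−α|s|^{N/(N−1)}} → 0 as |s| → ∞, and f(s)/|s|^{N−1} → 0 as s → 0. Then for every η > 0, every α > α_0 and every q ≥ 0 there exists a constant C > 0 such that for all s ∈ ℝ, |f(s)s| ≤ η|s|^N + C|s|^q ( e^{α|s|^{N/(N−1)}} − S_{N−2}(α, s) ). -/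
/-!
Put `x = α |s|^{N/(N-1)}`, so that `e^x - S_{N-2}(α, s)` is the tail `∑_{k ≥ N-1} x^k / k!`
of the exponential series. Near `0`, the hypothesis on `f(s) / |s|^{N-1}` gives
`|f(s) s| ≤ η |s|^N`. Away from `0`, continuity and the growth condition at some `α' ∈ (α₀, α)`
give `|f(s)| ≤ M e^{α' |s|^{N/(N-1)}}`. For large `|s|` the tail is at least `e^x / 2` and the
gap `e^{(α - α')|s|^{N/(N-1)}}` absorbs the factor `|s|`; on a bounded range `δ ≤ |s| ≤ T` the
tail is bounded below by its first term `x^{N-1} / (N-1)!`.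
-/

open MeasureTheory Real Filter

open Finset Topology Asymptotics Bornology
open scoped Nat

lemma SN_eq_sum_pow_div_factorial (N : ℕ) (α s : ℝ) :
    SN N α s = ∑ k ∈ range (N - 1), (α * |s| ^ ((N : ℝ) / (N - 1))) ^ k / k ! := by
  refine sum_congr rfl fun k _ => ?_
  rw [mul_pow, ← rpow_natCast (|s| ^ _), ← rpow_mul (abs_nonneg s), div_mul_eq_mul_div]
  ring_nf

lemma pow_div_factorial_le_exp_sub_sum (n : ℕ) {x : ℝ} (hx : 0 ≤ x) :
    x ^ n / n ! ≤ exp x - ∑ k ∈ range n, x ^ k / k ! := by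
  have := sum_le_exp_of_nonneg hx (n + 1)
  rw [sum_range_succ] at this
  linarith

lemma eventually_sum_pow_div_factorial_le_half_exp (n : ℕ) :
    ∀ᶠ x : ℝ in atTop, ∑ k ∈ range n, x ^ k / k ! ≤ exp x / 2 := by
  have h : Tendsto (fun x : ℝ => (∑ k ∈ range n, x ^ k / k !) * exp (-x)) atTop (𝓝 0) := by
    simp_rw [sum_mul]
    simpa [div_mul_eq_mul_div] using tendsto_finsetSum (range n) fun k _ =>
      (tendsto_pow_mul_exp_neg_atTop_nhds_zero k).div_const (k ! : ℝ)
  filter_upwards [h.eventually (ge_mem_nhds one_half_pos)] with x hx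
  rwa [exp_neg, ← div_eq_mul_inv, div_le_iff₀ (exp_pos x), one_div_mul_eq_div] at hx

section GrowthComparison

variable {p α' α q : ℝ} (n : ℕ)

lemma eventually_mul_exp_le_rpow_mul_exp_sub_sum (hp : 0 < p) (hα : 0 < α) (hα'α : α' < α)
    (hq : 0 ≤ q) :
    ∀ᶠ t : ℝ in atTop, t * exp (α' * t ^ p) ≤
      t ^ q * (exp (α * t ^ p) - ∑ k ∈ range n, (α * t ^ p) ^ k / k !) := by
  have hpow : Tendsto (fun t : ℝ => t ^ p) atTop atTop := tendsto_rpow_atTop hp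
  have hsum := ((tendsto_const_mul_atTop_of_pos hα).2 hpow).eventually
    (eventually_sum_pow_div_factorial_le_half_exp n)
  -- `t = (t ^ p) ^ p⁻¹` is negligible against `exp ((α - α') * t ^ p)`
  have hgap := ((isLittleO_rpow_exp_pos_mul_atTop p⁻¹ (sub_pos.2 hα'α)).comp_tendsto
    hpow).bound one_half_pos
  filter_upwards [hsum, hgap, eventually_ge_atTop 1] with t hsum hgap ht
  simp only [Function.comp, norm_eq_abs, abs_exp, rpow_rpow_inv (zero_le_one.trans ht) hp.ne',
    abs_of_nonneg (zero_le_one.trans ht)] at hgap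
  have hsplit : exp (α * t ^ p) = exp (α' * t ^ p) * exp ((α - α') * t ^ p) := by
    rw [← exp_add]; ring_nf
  calc t * exp (α' * t ^ p) ≤ exp (α * t ^ p) / 2 := by
        rw [hsplit]; nlinarith [exp_pos (α' * t ^ p)]
    _ ≤ exp (α * t ^ p) - ∑ k ∈ range n, (α * t ^ p) ^ k / k ! := by linarith
    _ ≤ t ^ q * (exp (α * t ^ p) - ∑ k ∈ range n, (α * t ^ p) ^ k / k !) :=
        le_mul_of_one_le_left (by linarith [exp_pos (α * t ^ p)]) (one_le_rpow ht hq)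

lemma exists_mul_exp_le_mul_rpow_mul_exp_sub_sum {δ : ℝ} (hp : 0 < p) (hα' : 0 ≤ α')
    (hα'α : α' < α) (hq : 0 ≤ q) (hδ : 0 < δ) :
    ∃ C > 0, ∀ t, δ ≤ t → t * exp (α' * t ^ p) ≤
      C * t ^ q * (exp (α * t ^ p) - ∑ k ∈ range n, (α * t ^ p) ^ k / k !) := by
  have hα : 0 < α := hα'.trans_lt hα'α
  obtain ⟨T, hT⟩ :=
    eventually_atTop.1 (eventually_mul_exp_le_rpow_mul_exp_sub_sum n hp hα hα'α hq)
  set c := δ ^ q * ((α * δ ^ p) ^ n / n !)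
  have hc : 0 < c := by positivity
  refine ⟨max 1 (T * exp (α' * T ^ p) / c), by positivity, fun t ht => ?_⟩
  have ht0 : 0 ≤ t := hδ.le.trans ht
  have htail : c ≤ t ^ q * (exp (α * t ^ p) - ∑ k ∈ range n, (α * t ^ p) ^ k / k !) := by
    refine mul_le_mul (rpow_le_rpow hδ.le ht hq) ?_ (by positivity) (by positivity)
    refine le_trans ?_ (pow_div_factorial_le_exp_sub_sum n (by positivity))
    gcongr
  rw [mul_assoc]
  rcases le_total T t with hTt | htT
  · exact (hT t hTt).trans (le_mul_of_one_le_left (hc.le.trans htail) (le_max_left _ _))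
  · calc t * exp (α' * t ^ p) ≤ T * exp (α' * T ^ p) := by
          have := ht0.trans htT
          gcongr
      _ = T * exp (α' * T ^ p) / c * c := by field_simp
      _ ≤ _ := mul_le_mul (le_max_right _ _) htail hc.le (by positivity)

end GrowthComparison

lemma exists_pos_abs_le_mul_exp_of_tendsto_cocompact {X : Type*} [TopologicalSpace X]
    {f g : X → ℝ} (hf : Continuous f) (hg : Continuous g)
    (h : Tendsto (fun x => |f x| * exp (-g x)) (cocompact X) (𝓝 0)) :
    ∃ M > 0, ∀ x, |f x| ≤ M * exp (g x) := by
  have hcont : Continuous fun x => |f x| * exp (-g x) := by fun_prop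
  obtain ⟨M, hM, hbound⟩ :=
    (hcont.isBounded_range_iff_isBigO.2 (h.isBigO_one ℝ)).exists_pos_norm_le
  refine ⟨M, hM, fun x => ?_⟩
  have := hbound _ (Set.mem_range_self x)
  rwa [norm_eq_abs, abs_of_nonneg (by positivity), exp_neg, ← div_eq_mul_inv,
    div_le_iff₀ (exp_pos _)] at this

lemma eventually_abs_mul_le_of_tendsto_div_pow {f : ℝ → ℝ} {n : ℕ} {η : ℝ} (hη : 0 < η)
    (h : Tendsto (fun s => f s / |s| ^ n) (𝓝[≠] 0) (𝓝 0)) :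
    ∀ᶠ s in 𝓝 0, |f s * s| ≤ η * |s| ^ (n + 1) := by
  have hlt := Metric.tendsto_nhds.1 h η hη
  rw [eventually_nhdsWithin_iff] at hlt
  filter_upwards [hlt] with s hs
  rcases eq_or_ne s 0 with rfl | hs0
  · simp
  have hpos : 0 < |s| ^ n := pow_pos (abs_pos.2 hs0) n
  specialize hs hs0
  rw [dist_zero_right, norm_div, norm_eq_abs, norm_of_nonneg hpos.le, div_lt_iff₀ hpos] at hs
  rw [abs_mul, pow_succ, ← mul_assoc]
  gcongr

theorem critical_growth_estimate (N : ℕ) (hN : 2 ≤ N) (α₀ : ℝ) (hα₀ : 0 < α₀)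
    (f : ℝ → ℝ) (hf : Continuous f)
    (hcrit : ∀ α > α₀,
      Tendsto (fun s : ℝ => |f s| * Real.exp (-(α * |s| ^ ((N : ℝ) / ((N : ℝ) - 1)))))
        (Filter.cocompact ℝ) (nhds 0))
    (hsmall : Tendsto (fun s : ℝ => f s / |s| ^ (N - 1)) (nhdsWithin 0 {0}ᶜ) (nhds 0)) :
    ∀ η > (0 : ℝ), ∀ α > α₀, ∀ q : ℝ, 0 ≤ q → ∃ C > (0 : ℝ), ∀ s : ℝ,
      |f s * s| ≤ η * |s| ^ N +
        C * |s| ^ q * (Real.exp (α * |s| ^ ((N : ℝ) / ((N : ℝ) - 1))) - SN N α s) := by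
  simp only [SN_eq_sum_pow_div_factorial]
  intro η hη α hα q hq
  set p := (N : ℝ) / ((N : ℝ) - 1)
  have hN' : (2 : ℝ) ≤ N := by exact_mod_cast hN
  have hp : 0 < p := div_pos (by positivity) (by linarith)
  obtain ⟨α', hα₀α', hα'α⟩ := exists_between hα
  obtain ⟨M, hM, hfM⟩ := exists_pos_abs_le_mul_exp_of_tendsto_cocompact hf
    (continuous_const.mul (continuous_abs.rpow_const fun _ => Or.inr hp.le)) (hcrit α' hα₀α')
  obtain ⟨δ, hδ, hfδ⟩ :=
    Metric.eventually_nhds_iff.1 (eventually_abs_mul_le_of_tendsto_div_pow hη hsmall)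
  obtain ⟨C, hC, hCδ⟩ := exists_mul_exp_le_mul_rpow_mul_exp_sub_sum (N - 1) hp
    (hα₀.trans hα₀α').le hα'α hq hδ
  refine ⟨M * C, by positivity, fun s => ?_⟩
  set E := exp (α * |s| ^ p) - ∑ k ∈ range (N - 1), (α * |s| ^ p) ^ k / (k ! : ℝ)
  have hx : 0 ≤ α * |s| ^ p := by have := hα₀.trans hα; positivity
  have hE : 0 ≤ E := (pow_div_factorial_le_exp_sub_sum (N - 1) hx).trans' (by positivity)
  have hηs : 0 ≤ η * |s| ^ N := by positivity
  have hCs : 0 ≤ M * C * |s| ^ q * E := mul_nonneg (by positivity) hE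
  rcases lt_or_ge |s| δ with hsδ | hsδ
  · have hsmall_s := hfδ (by simpa using hsδ)
    rw [Nat.sub_add_cancel (by omega)] at hsmall_s
    linarith
  · calc |f s * s| = |f s| * |s| := abs_mul _ _
      _ ≤ M * exp (α' * |s| ^ p) * |s| := by gcongr; exact hfM s
      _ = M * (|s| * exp (α' * |s| ^ p)) := by ring
      _ ≤ M * (C * |s| ^ q * E) := mul_le_mul_of_nonneg_left (hCδ |s| hsδ) hM.le
      _ ≤ η * |s| ^ N + M * C * |s| ^ q * E := by linarith
end

section
/- (Uniform integral tail estimate for bounded sets in the weighted norm.) Let N ≥ 2 be an integer, ε > 0, s > N and K > 0. Let A : ℝ^N → ℝ be a continuous nonnegative function such that for some M_0 > 0 the set {x ∈ ℝ^N : A(x) ≤ M_0} has finite Lebesgue measure. Then for every η > 0 there exist M_η > 0 and R_η > 0 such that for every μ ≥ M_η and every smooth compactly supported function u : ℝ^N → ℝ with ∫_{ℝ^N} ( |∇u|^N + (1 + μA(εx))|u|^N ) dx ≤ K, one has ∫_{{|x| > R_η}} |u|^s dx < η. -/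
set_option maxHeartbeats 1000000

open MeasureTheory Real Filter ENNReal Topology
open scoped NNReal

variable {N : ℕ}

lemma sobolev_boot (N : ℕ) (hN : 2 ≤ N) (B : ℝ≥0∞) (hB : B ≠ ⊤) (k : ℕ) :
    ∃ D : ℝ≥0∞, D ≠ ⊤ ∧ ∀ u : EuclideanSpace ℝ (Fin N) → ℝ, ContDiff ℝ 1 u →
      HasCompactSupport u →
      eLpNorm (fderiv ℝ u) N volume ≤ B → eLpNorm u N volume ≤ B →
      eLpNorm u (2 ^ k * N) volume ≤ D := by
  induction k with
  | zero => exact ⟨B, hB, fun u hu h2u h3u h4u => by simpa using h4u⟩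
  | succ k ih =>
    obtain ⟨D, hD, hDle⟩ := ih
    set q : ℕ := 2 ^ k * N with hq
    have hq2 : 2 ≤ q := le_trans hN (by
      have : 1 ≤ 2 ^ k := Nat.one_le_two_pow
      calc N = 1 * N := (one_mul N).symm
      _ ≤ 2 ^ k * N := Nat.mul_le_mul_right N this)
    have hN0 : (N : ℝ≥0) ≠ 0 := by positivity
    have hq0 : (q : ℝ≥0) ≠ 0 := by positivity
    set p : ℝ≥0 := ((N : ℝ≥0)⁻¹ + (q : ℝ≥0)⁻¹)⁻¹ with hp_def
    have hpinv : p⁻¹ = (N : ℝ≥0)⁻¹ + (q : ℝ≥0)⁻¹ := by rw [hp_def, inv_inv]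
    have hsum_le : (N : ℝ≥0)⁻¹ + (q : ℝ≥0)⁻¹ ≤ 1 := by
      have h1 : (N : ℝ≥0)⁻¹ ≤ 2⁻¹ := by
        rw [inv_le_inv₀ (by positivity) (by norm_num)]
        exact_mod_cast hN
      have h2 : (q : ℝ≥0)⁻¹ ≤ 2⁻¹ := by
        rw [inv_le_inv₀ (by positivity) (by norm_num)]
        exact_mod_cast hq2
      calc (N : ℝ≥0)⁻¹ + (q : ℝ≥0)⁻¹ ≤ 2⁻¹ + 2⁻¹ := add_le_add h1 h2
        _ = 1 := by rw [← NNReal.coe_inj]; push_cast; norm_num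
    have hsum0 : (N : ℝ≥0)⁻¹ + (q : ℝ≥0)⁻¹ ≠ 0 := by positivity
    have hp : 1 ≤ p := by
      rw [hp_def, one_le_inv_iff₀]
      exact ⟨by positivity, hsum_le⟩
    have hp0 : p ≠ 0 := by positivity
    have hfr : Module.finrank ℝ (EuclideanSpace ℝ (Fin N)) = N := finrank_euclideanSpace_fin
    have hfrpos : 0 < Module.finrank ℝ (EuclideanSpace ℝ (Fin N)) := by omega
    have hp' : (((q : ℝ≥0)) : ℝ)⁻¹ = (p : ℝ)⁻¹ -
        (Module.finrank ℝ (EuclideanSpace ℝ (Fin N)) : ℝ)⁻¹ := by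
      rw [hfr]
      have : (p : ℝ)⁻¹ = (N : ℝ)⁻¹ + (q : ℝ)⁻¹ := by
        rw [← NNReal.coe_inv, hpinv]
        push_cast
        ring
      rw [this]; push_cast; ring
    set C : ℝ≥0 := SNormLESNormFDerivOfEqConst (E := EuclideanSpace ℝ (Fin N)) ℝ volume p with hC
    refine ⟨((C : ℝ≥0∞) * 2 * (D * B)) ^ (1/2 : ℝ), ?_, ?_⟩
    · apply ENNReal.rpow_ne_top_of_nonneg (by norm_num)
      exact ENNReal.mul_ne_top (ENNReal.mul_ne_top ENNReal.coe_ne_top (by norm_num))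
        (ENNReal.mul_ne_top hD hB)
    intro u hu h2u h3u h4u
    set v : EuclideanSpace ℝ (Fin N) → ℝ := fun x => u x * u x with hv_def
    have hv : ContDiff ℝ 1 v := hu.mul hu
    have h2v : HasCompactSupport v := h2u.mul_left
    -- derivative of v
    have hder : ∀ x, fderiv ℝ v x = u x • fderiv ℝ u x + u x • fderiv ℝ u x := by
      intro x
      have h := ((hu.differentiable one_ne_zero x).hasFDerivAt.mul
        (hu.differentiable one_ne_zero x).hasFDerivAt)
      exact h.fderiv
    -- Sobolev for v
    have hsob := eLpNorm_le_eLpNorm_fderiv_of_eq (F := ℝ) volume hv h2v hp hfrpos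
      (p' := (q : ℝ≥0)) hp'
    -- bound the derivative norm
    set w : EuclideanSpace ℝ (Fin N) → (EuclideanSpace ℝ (Fin N) →L[ℝ] ℝ) :=
      u • fderiv ℝ u with hw_def
    have hwb : ∀ x, ‖fderiv ℝ v x‖ ≤ (2 : ℝ≥0) * ‖w x‖ := by
      intro x
      rw [hder x]
      calc ‖u x • fderiv ℝ u x + u x • fderiv ℝ u x‖
          ≤ ‖u x • fderiv ℝ u x‖ + ‖u x • fderiv ℝ u x‖ := norm_add_le _ _
        _ = (2 : ℝ≥0) * ‖w x‖ := by simp [hw_def]; ring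
    have hfdv : eLpNorm (fderiv ℝ v) p volume ≤ (2 : ℝ≥0) • eLpNorm w p volume :=
      eLpNorm_le_nnreal_smul_eLpNorm_of_ae_le_mul (Eventually.of_forall hwb) p
    -- Hölder for w
    have hcont_fd : Continuous (fderiv ℝ u) := hu.continuous_fderiv one_ne_zero
    have hhol : eLpNorm w p volume ≤ eLpNorm u q volume * eLpNorm (fderiv ℝ u) N volume := by
      have h1 : (1 : ℝ≥0∞) / (p : ℝ≥0∞) = 1 / (q : ℝ≥0∞) + 1 / (N : ℝ≥0∞) := by
        simp only [one_div]
        rw [← ENNReal.coe_natCast q, ← ENNReal.coe_natCast N,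
          ← ENNReal.coe_inv hp0, ← ENNReal.coe_inv hq0, ← ENNReal.coe_inv hN0,
          ← ENNReal.coe_add, hpinv]
        rw [add_comm]
      exact eLpNorm_smul_le_mul_eLpNorm hcont_fd.aestronglyMeasurable
        hu.continuous.aestronglyMeasurable (hpqr := ⟨by simpa only [one_div] using h1.symm⟩)
    -- rewrite eLpNorm v q
    have hqc : ((q : ℕ) : ℝ≥0∞) = 2 ^ k * (N : ℝ≥0∞) := by rw [hq]; push_cast; ring
    have hvq : eLpNorm v q volume
        = eLpNorm u (2 ^ (k+1) * (N : ℝ≥0∞)) volume ^ (2 : ℝ) := by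
      have h2 : v = fun x => ‖u x‖ ^ (2 : ℝ) := by
        funext x
        rw [Real.rpow_two, Real.norm_eq_abs, sq, abs_mul_abs_self, hv_def]
      rw [h2, eLpNorm_norm_rpow u (by norm_num : (0:ℝ) < 2)]
      congr 2
      rw [ENNReal.ofReal_ofNat, hqc]
      ring
    -- combine
    have hDu := hDle u hu h2u h3u h4u
    rw [← hqc] at hDu
    have hD2 : eLpNorm u (2 ^ (k+1) * (N : ℝ≥0∞)) volume ^ (2 : ℝ)
        ≤ (C : ℝ≥0∞) * 2 * (D * B) := by
      rw [← hvq]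
      calc eLpNorm v q volume ≤ C * eLpNorm (fderiv ℝ v) p volume := hsob
        _ ≤ (C : ℝ≥0∞) * ((2 : ℝ≥0) • eLpNorm w p volume) := by gcongr
        _ = (C : ℝ≥0∞) * 2 * eLpNorm w p volume := by
            rw [ENNReal.smul_def, smul_eq_mul]; push_cast; ring
        _ ≤ (C : ℝ≥0∞) * 2 * (eLpNorm u q volume * eLpNorm (fderiv ℝ u) N volume) := by
            exact mul_le_mul_right hhol _
        _ ≤ (C : ℝ≥0∞) * 2 * (D * B) := by
            exact mul_le_mul_right (mul_le_mul' hDu h3u) _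
    calc eLpNorm u (2 ^ (k+1) * (N : ℝ≥0∞)) volume
        = (eLpNorm u (2 ^ (k+1) * (N : ℝ≥0∞)) volume ^ (2:ℝ)) ^ (1/2 : ℝ) := by
          rw [← ENNReal.rpow_mul]; norm_num
      _ ≤ ((C : ℝ≥0∞) * 2 * (D * B)) ^ (1/2 : ℝ) :=
          ENNReal.rpow_le_rpow hD2 (by norm_num)

lemma eLpNorm_nat_le_of_integral_le {α F : Type*} [MeasurableSpace α] {μm : Measure α}
    [NormedAddCommGroup F]
    (N : ℕ) (hN : 0 < N) (K : ℝ) (g : α → F)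
    (hint : Integrable (fun x => ‖g x‖ ^ N) μm)
    (hle : (∫ x, ‖g x‖ ^ N ∂μm) ≤ K) :
    eLpNorm g N μm ≤ ENNReal.ofReal K ^ (1/(N:ℝ)) := by
  have hN0 : ((N : ℝ≥0∞)) ≠ 0 := by exact_mod_cast hN.ne'
  rw [eLpNorm_eq_lintegral_rpow_enorm_toReal hN0 (by simp)]
  simp only [enorm_eq_nnnorm]
  have htr : ((N : ℝ≥0∞)).toReal = (N : ℝ) := by simp
  rw [htr]
  have h1 : (∫⁻ x, (‖g x‖₊ : ℝ≥0∞) ^ (N:ℝ) ∂μm)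
      = ENNReal.ofReal (∫ x, ‖g x‖ ^ N ∂μm) := by
    rw [ofReal_integral_eq_lintegral_ofReal hint
      (Filter.Eventually.of_forall fun x => by positivity)]
    refine lintegral_congr fun x => ?_
    rw [← enorm_eq_nnnorm, ← ofReal_norm, ENNReal.ofReal_rpow_of_nonneg (norm_nonneg _)
      (by positivity), Real.rpow_natCast]
  rw [h1]
  exact ENNReal.rpow_le_rpow (ENNReal.ofReal_le_ofReal hle) (by positivity)

theorem uniform_tail_estimate (N : ℕ) (hN : 2 ≤ N) (ε s K : ℝ)
    (hε : 0 < ε) (hs : (N : ℝ) < s) (hK : 0 < K)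
    (A : EuclideanSpace ℝ (Fin N) → ℝ) (hA : Continuous A) (hA0 : ∀ x, 0 ≤ A x)
    (M₀ : ℝ) (hM₀ : 0 < M₀)
    (hfin : volume {x : EuclideanSpace ℝ (Fin N) | A x ≤ M₀} < ⊤) :
    ∀ η > (0 : ℝ), ∃ Mη > (0 : ℝ), ∃ Rη > (0 : ℝ), ∀ μ ≥ Mη,
      ∀ u : EuclideanSpace ℝ (Fin N) → ℝ, ContDiff ℝ (⊤ : ℕ∞) u → HasCompactSupport u →
      (∫ x, (‖fderiv ℝ u x‖ ^ N + (1 + μ * A (ε • x)) * |u x| ^ N)) ≤ K →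
      (∫ x in {x : EuclideanSpace ℝ (Fin N) | Rη < ‖x‖}, |u x| ^ s) < η := by
  intro η hη
  have hNR : (0:ℝ) < N := by positivity
  have hs0 : (0:ℝ) < s := lt_trans hNR hs
  -- choose k with s < 2^k * N
  obtain ⟨k, hk⟩ := pow_unbounded_of_one_lt (R := ℝ) s one_lt_two
  set qn : ℕ := 2 ^ k * N with hqn
  set qr : ℝ := (qn : ℝ) with hqr
  have hqs : s < qr := by
    refine lt_of_lt_of_le hk ?_
    rw [hqr, hqn]
    push_cast
    exact le_mul_of_one_le_right (by positivity) (by exact_mod_cast Nat.one_le_of_lt hN)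
  have hNq : (N:ℝ) < qr := lt_trans hs hqs
  have hqr0 : 0 < qr := lt_trans hNR hNq
  -- Sobolev iteration constant
  set B : ℝ≥0∞ := ENNReal.ofReal K ^ (1/(N:ℝ)) with hBdef
  have hB : B ≠ ⊤ := ENNReal.rpow_ne_top_of_nonneg (by positivity) ENNReal.ofReal_ne_top
  obtain ⟨D₀, hD₀top, hboot⟩ := sobolev_boot N hN B hB k
  set D : ℝ≥0∞ := max D₀ 1 with hDdef
  have hD1 : 1 ≤ D := le_max_right _ _
  have hDtop : D ≠ ⊤ := (max_lt hD₀top.lt_top ENNReal.one_lt_top).ne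
  have hD0 : D ≠ 0 := (lt_of_lt_of_le zero_lt_one hD1).ne'
  -- interpolation parameter
  set θ : ℝ := (qr - s)/(qr - (N:ℝ)) with hθdef
  have hθ0 : 0 < θ := div_pos (by linarith) (by linarith)
  have hθ1 : θ < 1 := (div_lt_one (by linarith)).mpr (by linarith)
  have key : θ * (qr - (N:ℝ)) = qr - s := by
    rw [hθdef]
    exact div_mul_cancel₀ _ (by linarith)
  clear_value θ
  have hcomb : (N:ℝ) * θ + qr * (1-θ) = s := by linear_combination -key
  -- the main smallness constants
  set Y : ℝ≥0∞ := D ^ (qr * (1-θ)) with hYdef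
  have hY0 : Y ≠ 0 := (ENNReal.rpow_pos (lt_of_lt_of_le zero_lt_one hD1) hDtop).ne'
  have hYtop : Y ≠ ⊤ := ENNReal.rpow_ne_top_of_nonneg (by nlinarith) hDtop
  set α : ℝ≥0∞ := (ENNReal.ofReal η / (2 * Y)) ^ (1/θ) with hαdef
  have hbase0 : ENNReal.ofReal η / (2 * Y) ≠ 0 :=
    (ENNReal.div_pos (by simpa using hη) (ENNReal.mul_ne_top (by norm_num) hYtop)).ne'
  have hbasetop : ENNReal.ofReal η / (2 * Y) ≠ ⊤ :=
    (ENNReal.div_lt_top ENNReal.ofReal_ne_top (by simp [hY0])).ne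
  have hα0 : α ≠ 0 := (ENNReal.rpow_pos (pos_iff_ne_zero.mpr hbase0) hbasetop).ne'
  have hαtop : α ≠ ⊤ := ENNReal.rpow_ne_top_of_nonneg (by positivity) hbasetop
  set α2 : ℝ≥0∞ := α / 2 with hα2def
  have hα2_0 : α2 ≠ 0 := (ENNReal.div_pos hα0 (by norm_num)).ne'
  have hα2top : α2 ≠ ⊤ := (ENNReal.div_lt_top hαtop (by norm_num)).ne
  set a : ℝ := α2.toReal with hadef
  have ha : 0 < a := ENNReal.toReal_pos hα2_0 hα2top
  have hofa : ENNReal.ofReal a = α2 := ENNReal.ofReal_toReal hα2top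
  -- choice of Mη
  set Mη : ℝ := max 1 (K/(a*M₀)) with hMηdef
  have hMηpos : 0 < Mη := lt_of_lt_of_le zero_lt_one (le_max_left _ _)
  -- the sublevel set
  set S : Set (EuclideanSpace ℝ (Fin N)) := {x | A (ε • x) ≤ M₀} with hSdef
  have hSmeas : MeasurableSet S :=
    measurableSet_le (hA.comp (continuous_const_smul ε)).measurable measurable_const
  have hSfin : volume S < ⊤ := by
    have hSeq : S = (ε • ·) ⁻¹' {y | A y ≤ M₀} := rfl
    rw [hSeq, MeasureTheory.Measure.addHaar_preimage_smul volume hε.ne']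
    exact ENNReal.mul_lt_top ENNReal.ofReal_lt_top hfin
  -- Hölder exponent for the finite-measure part
  set c : ℝ := 1 - (N:ℝ)/qr with hcdef
  have hc0 : 0 < c := by
    rw [hcdef, sub_pos]
    exact (div_lt_one hqr0).mpr hNq
  have hc1 : c ≤ 1 := by
    rw [hcdef]
    have : 0 ≤ (N:ℝ)/qr := by positivity
    linarith
  -- smallness of the tail measure
  set β : ℝ≥0∞ := (α2 / D ^ (N:ℝ)) ^ (1/c) with hβdef
  have hDN0 : D ^ (N:ℝ) ≠ 0 := (ENNReal.rpow_pos (lt_of_lt_of_le zero_lt_one hD1) hDtop).ne'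
  have hDNtop : D ^ (N:ℝ) ≠ ⊤ := ENNReal.rpow_ne_top_of_nonneg (by positivity) hDtop
  have hβ0 : β ≠ 0 :=
    (ENNReal.rpow_pos (ENNReal.div_pos hα2_0 hDNtop) (ENNReal.div_lt_top hα2top hDN0).ne).ne'
  have htend : Filter.Tendsto (fun n : ℕ => volume (S \ Metric.closedBall 0 n)) atTop
      (𝓝 (volume (⋂ n : ℕ, S \ Metric.closedBall 0 n))) := by
    refine tendsto_measure_iInter_atTop
      (fun n => (hSmeas.diff measurableSet_closedBall).nullMeasurableSet) ?_ ⟨0, ?_⟩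
    · intro m n hmn
      exact Set.diff_subset_diff_right (Metric.closedBall_subset_closedBall (by exact_mod_cast hmn))
    · exact ((measure_mono Set.diff_subset).trans_lt hSfin).ne
  have hiInter : (⋂ n : ℕ, S \ Metric.closedBall 0 n) = ∅ := by
    ext x
    simp only [Set.mem_iInter, Set.mem_empty_iff_false, iff_false, not_forall]
    obtain ⟨n, hn⟩ := exists_nat_ge ‖x‖
    refine ⟨n, fun h => ?_⟩
    exact h.2 (by simpa [Metric.mem_closedBall, dist_zero_right] using hn)
  rw [hiInter, measure_empty] at htend
  obtain ⟨n₀, hn₀⟩ := (htend.eventually_lt_const (pos_iff_ne_zero.mpr hβ0)).exists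
  set Rη : ℝ := (n₀ : ℝ) + 1 with hRηdef
  have hRηpos : 0 < Rη := by positivity
  refine ⟨Mη, hMηpos, Rη, hRηpos, ?_⟩
  intro μ hμ u hu h2u hint
  have hμ1 : 1 ≤ μ := le_trans (le_max_left _ _) hμ
  have hμpos : 0 < μ := lt_of_lt_of_le zero_lt_one hμ1
  set T : Set (EuclideanSpace ℝ (Fin N)) := {x | Rη < ‖x‖} with hTdef
  have hTmeas : MeasurableSet T := (isOpen_lt continuous_const continuous_norm).measurableSet
  -- basic facts about u
  have hu1 : ContDiff ℝ 1 u := hu.of_le (by simp)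
  have cu : Continuous u := hu1.continuous
  have cfd : Continuous (fderiv ℝ u) := hu1.continuous_fderiv one_ne_zero
  have hNne : N ≠ 0 := by omega
  -- the two parts of the integrand
  set g₁ : EuclideanSpace ℝ (Fin N) → ℝ := fun x => ‖fderiv ℝ u x‖ ^ N with hg₁
  set g₂ : EuclideanSpace ℝ (Fin N) → ℝ := fun x => (1 + μ * A (ε • x)) * |u x| ^ N with hg₂
  have cg₁ : Continuous g₁ := (cfd.norm).pow N
  have cwt : Continuous (fun x => 1 + μ * A (ε • x)) :=
    continuous_const.add (continuous_const.mul (hA.comp (continuous_const_smul ε)))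
  have cuN : Continuous (fun x => |u x| ^ N) := (cu.abs).pow N
  have cg₂ : Continuous g₂ := cwt.mul cuN
  have sg₁ : HasCompactSupport g₁ :=
    (h2u.fderiv ℝ).comp_left (g := fun t => ‖t‖ ^ N) (by simp [zero_pow hNne])
  have suN : HasCompactSupport (fun x => |u x| ^ N) :=
    h2u.comp_left (g := fun t => |t| ^ N) (by simp [zero_pow hNne])
  have sg₂ : HasCompactSupport g₂ := suN.mul_left
  have ig₁ : Integrable g₁ := cg₁.integrable_of_hasCompactSupport sg₁
  have ig₂ : Integrable g₂ := cg₂.integrable_of_hasCompactSupport sg₂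
  have iuN : Integrable (fun x => |u x| ^ N) := cuN.integrable_of_hasCompactSupport suN
  have g₂nn : ∀ x, 0 ≤ g₂ x := by
    intro x
    have := hA0 (ε • x)
    have h1 : (0:ℝ) ≤ 1 + μ * A (ε • x) := by positivity
    positivity
  have hsplit : (∫ x, g₁ x) + (∫ x, g₂ x) ≤ K := by
    rw [← integral_add ig₁ ig₂]
    exact hint
  have hI₁ : (∫ x, g₁ x) ≤ K := by
    have h0 : (0:ℝ) ≤ ∫ x, g₂ x := integral_nonneg g₂nn
    linarith
  have hIu : (∫ x, |u x| ^ N) ≤ K := by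
    have hmono : ∀ x, |u x| ^ N ≤ g₂ x := by
      intro x
      show |u x| ^ N ≤ (1 + μ * A (ε • x)) * |u x| ^ N
      have hA' := hA0 (ε • x)
      nlinarith [mul_nonneg (mul_nonneg hμpos.le hA') (pow_nonneg (abs_nonneg (u x)) N)]
    calc (∫ x, |u x| ^ N) ≤ ∫ x, g₂ x := integral_mono iuN ig₂ hmono
      _ ≤ K := by
          have h0 : (0:ℝ) ≤ ∫ x, g₁ x := integral_nonneg fun x =>
            pow_nonneg (norm_nonneg (fderiv ℝ u x)) N
          linarith
  -- weighted bound
  have iwN : Integrable (fun x => A (ε • x) * |u x| ^ N) :=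
    (((hA.comp (continuous_const_smul ε)).mul cuN).integrable_of_hasCompactSupport suN.mul_left)
  have hIw : (∫ x, A (ε • x) * |u x| ^ N) ≤ K / μ := by
    rw [le_div_iff₀ hμpos, mul_comm]
    rw [← integral_const_mul]
    have hmono : ∀ x, μ * (A (ε • x) * |u x| ^ N) ≤ g₂ x := by
      intro x
      show μ * (A (ε • x) * |u x| ^ N) ≤ (1 + μ * A (ε • x)) * |u x| ^ N
      have := hA0 (ε • x)
      nlinarith [pow_nonneg (abs_nonneg (u x)) N]
    calc (∫ x, μ * (A (ε • x) * |u x| ^ N)) ≤ ∫ x, g₂ x :=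
          integral_mono (iwN.const_mul μ) ig₂ hmono
      _ ≤ K := by
          have h0 : (0:ℝ) ≤ ∫ x, g₁ x := integral_nonneg fun x =>
            pow_nonneg (norm_nonneg (fderiv ℝ u x)) N
          linarith
  -- eLpNorm bounds
  have hfB : eLpNorm (fderiv ℝ u) N volume ≤ B := by
    rw [hBdef]
    exact eLpNorm_nat_le_of_integral_le N (by omega) K (fderiv ℝ u) ig₁ hI₁
  have huB : eLpNorm u N volume ≤ B := by
    rw [hBdef]
    apply eLpNorm_nat_le_of_integral_le N (by omega) K u
    · simpa only [Real.norm_eq_abs] using iuN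
    · simpa only [Real.norm_eq_abs] using hIu
  have hqE := (hboot u hu1 h2u hfB huB).trans (le_max_left D₀ 1)
  -- move to lintegrals
  set f : EuclideanSpace ℝ (Fin N) → ℝ≥0∞ := fun x => ENNReal.ofReal |u x| with hfdef
  have hfmeas : Measurable f := (cu.abs).measurable.ennreal_ofReal
  have hfeq : ∀ x, (‖u x‖₊ : ℝ≥0∞) = f x := by
    intro x
    rw [hfdef, ← enorm_eq_nnnorm, ← ofReal_norm, Real.norm_eq_abs]
  have hIq : (∫⁻ x, f x ^ qr) ≤ D ^ qr := by
    have h1 : eLpNorm u (2 ^ k * (N:ℝ≥0∞)) volume = (∫⁻ x, f x ^ qr) ^ (1/qr) := by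
      rw [eLpNorm_eq_lintegral_rpow_enorm_toReal
        (mul_ne_zero (pow_ne_zero _ (by norm_num)) (by exact_mod_cast hNne))
        (ENNReal.mul_ne_top (ENNReal.pow_ne_top (by norm_num)) (ENNReal.natCast_ne_top N))]
      simp only [enorm_eq_nnnorm]
      congr 1
      · refine lintegral_congr fun x => ?_
        rw [hfeq]
        congr 1
        rw [hqr, hqn]
        simp
      · rw [hqr, hqn]
        simp
    rw [h1] at hqE
    calc (∫⁻ x, f x ^ qr) = ((∫⁻ x, f x ^ qr) ^ (1/qr)) ^ qr := by
          rw [← ENNReal.rpow_mul, one_div, inv_mul_cancel₀ hqr0.ne', ENNReal.rpow_one]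
      _ ≤ D ^ qr := ENNReal.rpow_le_rpow hqE hqr0.le
  -- weighted lintegral bound
  have hIwl : (∫⁻ x in Sᶜ, f x ^ (N:ℝ)) ≤ α2 := by
    have hreal : (∫ x in Sᶜ, |u x| ^ N) ≤ a := by
      have h1 : M₀ * (∫ x in Sᶜ, |u x| ^ N) ≤ ∫ x in Sᶜ, A (ε • x) * |u x| ^ N := by
        rw [← integral_const_mul]
        refine setIntegral_mono_on ((iuN.const_mul M₀).restrict)
          (iwN.restrict) hSmeas.compl ?_
        intro x hx
        have hx' : M₀ < A (ε • x) := by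
          simpa [hSdef] using hx
        nlinarith [pow_nonneg (abs_nonneg (u x)) N]
      have h2 : (∫ x in Sᶜ, A (ε • x) * |u x| ^ N) ≤ ∫ x, A (ε • x) * |u x| ^ N := by
        apply setIntegral_le_integral iwN
        filter_upwards with x
        have := hA0 (ε • x)
        positivity
      have h3 : (∫ x in Sᶜ, |u x| ^ N) ≤ K / (μ * M₀) := by
        rw [le_div_iff₀ (by positivity)]
        have h5 : M₀ * (∫ x in Sᶜ, |u x| ^ N) ≤ K / μ := h1.trans (h2.trans hIw)
        rw [le_div_iff₀ hμpos] at h5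
        calc (∫ x in Sᶜ, |u x| ^ N) * (μ * M₀)
            = M₀ * (∫ x in Sᶜ, |u x| ^ N) * μ := by ring
          _ ≤ K := h5
      refine h3.trans ?_
      have hμM : K/(a*M₀) ≤ μ := le_trans (le_max_right _ _) hμ
      rw [div_le_iff₀ (by positivity)] at hμM ⊢
      nlinarith
    have h4 : (∫⁻ x in Sᶜ, f x ^ (N:ℝ)) = ENNReal.ofReal (∫ x in Sᶜ, |u x| ^ N) := by
      rw [ofReal_integral_eq_lintegral_ofReal (iuN.restrict)
        (Filter.Eventually.of_forall fun x => by positivity)]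
      refine lintegral_congr fun x => ?_
      rw [← Real.rpow_natCast |u x| N,
        ← ENNReal.ofReal_rpow_of_nonneg (abs_nonneg _) (by positivity)]
    rw [h4, ← hofa]
    exact ENNReal.ofReal_le_ofReal hreal
  -- tail measure smallness
  have hTS : volume (T ∩ S) < β := by
    refine lt_of_le_of_lt (measure_mono ?_) hn₀
    rintro x ⟨hxT, hxS⟩
    refine ⟨hxS, ?_⟩
    simp only [Metric.mem_closedBall, dist_zero_right, not_le]
    have : Rη < ‖x‖ := hxT
    rw [hRηdef] at this
    linarith
  -- the N-lintegral over the tail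
  have hIN : (∫⁻ x in T, f x ^ (N:ℝ)) ≤ α := by
    rw [← lintegral_inter_add_diff (fun x => f x ^ (N:ℝ)) T hSmeas]
    have hpart1 : (∫⁻ x in T ∩ S, f x ^ (N:ℝ)) ≤ α2 := by
      have hconj2 : Real.HolderConjugate (qr/(N:ℝ)) c⁻¹ := by
        rw [Real.holderConjugate_iff]; constructor
        · exact (one_lt_div hNR).mpr hNq
        · rw [inv_inv, hcdef]
          field_simp
          ring
      have hhol := ENNReal.lintegral_mul_le_Lp_mul_Lq (volume.restrict (T ∩ S)) hconj2
        (f := fun x => f x ^ (N:ℝ)) (g := fun _ => 1)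
        ((hfmeas.pow_const _).aemeasurable) aemeasurable_const
      simp only [Pi.mul_apply, mul_one, ENNReal.one_rpow, lintegral_one,
        Measure.restrict_apply MeasurableSet.univ, Set.univ_inter] at hhol
      have he1 : ∀ x, (f x ^ (N:ℝ)) ^ (qr/(N:ℝ)) = f x ^ qr := by
        intro x
        rw [← ENNReal.rpow_mul]
        congr 1
        field_simp
      calc (∫⁻ x in T ∩ S, f x ^ (N:ℝ))
          ≤ (∫⁻ x in T ∩ S, (f x ^ (N:ℝ)) ^ (qr/(N:ℝ))) ^ (1/(qr/(N:ℝ)))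
            * volume (T ∩ S) ^ (1/(c⁻¹)) := hhol
        _ = (∫⁻ x in T ∩ S, f x ^ qr) ^ ((N:ℝ)/qr) * volume (T ∩ S) ^ c := by
            rw [lintegral_congr he1]
            simp only [one_div, inv_inv, inv_div]
        _ ≤ (D ^ qr) ^ ((N:ℝ)/qr) * β ^ c :=
            mul_le_mul' (ENNReal.rpow_le_rpow
                (le_trans (setLIntegral_le_lintegral _ _) hIq) (by positivity))
              (ENNReal.rpow_le_rpow hTS.le hc0.le)
        _ = D ^ (N:ℝ) * (α2 / D ^ (N:ℝ)) := by
            have hβc : β ^ c = α2 / D ^ (N:ℝ) := by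
              rw [hβdef, ← ENNReal.rpow_mul, one_div, inv_mul_cancel₀ hc0.ne',
                ENNReal.rpow_one]
            have hDq : (D ^ qr) ^ ((N:ℝ)/qr) = D ^ (N:ℝ) := by
              rw [← ENNReal.rpow_mul, mul_comm qr ((N:ℝ)/qr), div_mul_cancel₀ _ hqr0.ne']
            rw [hβc, hDq]
        _ = α2 := ENNReal.mul_div_cancel' (fun h => absurd h hDN0) (fun h => absurd h hDNtop)
    have hpart2 : (∫⁻ x in T \ S, f x ^ (N:ℝ)) ≤ α2 := by
      refine le_trans (lintegral_mono_set ?_) hIwl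
      exact fun x hx => hx.2
    calc (∫⁻ x in T ∩ S, f x ^ (N:ℝ)) + (∫⁻ x in T \ S, f x ^ (N:ℝ))
        ≤ α2 + α2 := add_le_add hpart1 hpart2
      _ = α := by rw [hα2def, ENNReal.add_halves]
  -- interpolation on the tail
  have hmain : (∫⁻ x in T, f x ^ s) < ENNReal.ofReal η := by
    have hconj : Real.HolderConjugate (1/θ) (1/(1-θ)) := by
      rw [Real.holderConjugate_iff]; constructor
      · rw [lt_div_iff₀ hθ0]; linarith
      · rw [one_div, one_div, inv_inv, inv_inv]; ring
    have hhol := ENNReal.lintegral_mul_le_Lp_mul_Lq (volume.restrict T) hconj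
      (f := fun x => (f x ^ (N:ℝ)) ^ θ) (g := fun x => (f x ^ qr) ^ (1-θ))
      (((hfmeas.pow_const _).pow_const _).aemeasurable)
      (((hfmeas.pow_const _).pow_const _).aemeasurable)
    have hptw : ∀ x, f x ^ s = (f x ^ (N:ℝ)) ^ θ * (f x ^ qr) ^ (1-θ) := by
      intro x
      rw [← ENNReal.rpow_mul, ← ENNReal.rpow_mul,
        ← ENNReal.rpow_add_of_nonneg _ _ (by positivity) (by nlinarith), hcomb]
    have he2 : ∀ x, ((f x ^ (N:ℝ)) ^ θ) ^ (1/θ) = f x ^ (N:ℝ) := by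
      intro x
      rw [← ENNReal.rpow_mul, mul_one_div, div_self hθ0.ne', ENNReal.rpow_one]
    have he3 : ∀ x, ((f x ^ qr) ^ (1-θ)) ^ (1/(1-θ)) = f x ^ qr := by
      intro x
      rw [← ENNReal.rpow_mul, mul_one_div, div_self (by linarith : (1:ℝ)-θ ≠ 0),
        ENNReal.rpow_one]
    calc (∫⁻ x in T, f x ^ s)
        = ∫⁻ x in T, ((f x ^ (N:ℝ)) ^ θ) * ((f x ^ qr) ^ (1-θ)) := lintegral_congr hptw
      _ ≤ (∫⁻ x in T, (((f x ^ (N:ℝ)) ^ θ) ^ (1/θ))) ^ (1/(1/θ))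
          * (∫⁻ x in T, (((f x ^ qr) ^ (1-θ)) ^ (1/(1-θ)))) ^ (1/(1/(1-θ))) := hhol
      _ = (∫⁻ x in T, f x ^ (N:ℝ)) ^ θ * (∫⁻ x in T, f x ^ qr) ^ (1-θ) := by
          rw [lintegral_congr he2, lintegral_congr he3, one_div_one_div, one_div_one_div]
      _ ≤ α ^ θ * (D ^ qr) ^ (1-θ) :=
          mul_le_mul' (ENNReal.rpow_le_rpow hIN hθ0.le)
            (ENNReal.rpow_le_rpow (le_trans (setLIntegral_le_lintegral _ _) hIq)
              (by linarith))
      _ = (ENNReal.ofReal η / (2 * Y)) * Y := by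
          rw [hαdef, ← ENNReal.rpow_mul, one_div, inv_mul_cancel₀ hθ0.ne',
            ENNReal.rpow_one, hYdef, ← ENNReal.rpow_mul]
      _ = ENNReal.ofReal η / 2 := by
          calc ENNReal.ofReal η / (2 * Y) * Y
              = ENNReal.ofReal η * (2⁻¹ * Y⁻¹) * Y := by
                rw [div_eq_mul_inv,
                  ENNReal.mul_inv (Or.inl (by norm_num)) (Or.inl (by norm_num))]
            _ = ENNReal.ofReal η * 2⁻¹ * (Y⁻¹ * Y) := by ring
            _ = ENNReal.ofReal η * 2⁻¹ := by rw [ENNReal.inv_mul_cancel hY0 hYtop, mul_one]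
            _ = ENNReal.ofReal η / 2 := by rw [div_eq_mul_inv]
      _ < ENNReal.ofReal η := ENNReal.half_lt_self (by simpa using hη) ENNReal.ofReal_ne_top
  -- convert to the Bochner integral
  have hfinal : (∫ x in T, |u x| ^ s) = (∫⁻ x in T, f x ^ s).toReal := by
    rw [integral_eq_lintegral_of_nonneg_ae
      (Filter.Eventually.of_forall fun x => Real.rpow_nonneg (abs_nonneg _) s)
      ((cu.abs.rpow_const (fun x => Or.inr hs0.le)).aestronglyMeasurable)]
    congr 1
    refine lintegral_congr fun x => ?_
    rw [hfdef, ENNReal.ofReal_rpow_of_nonneg (abs_nonneg _) hs0.le]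
  rw [hTdef] at hfinal
  rw [hfinal]
  exact ENNReal.toReal_lt_of_lt_ofReal hmain
end

section
/- (Nehari points maximize the energy along rays.) Let N ≥ 2 be an integer and let f : ℝ → ℝ be continuous with f(s) = 0 for s ≤ 0 and such that s ↦ f(s)/s^{N−1} is strictly increasing on (0, ∞); set F(s) := ∫_0^s f(τ) dτ. Let u : ℝ^N → ℝ be a smooth compactly supported nonnegative function, not identically zero, satisfying the Nehari identity ∫_{ℝ^N}(|∇u|^N + |u|^N) dx = ∫_{ℝ^N} f(u)u dx. Then for every t ≥ 0, (t^N/N)∫_{ℝ^N}(|∇u|^N + |u|^N) dx − ∫_{ℝ^N} F(tu) dx ≤ (1/N)∫_{ℝ^N}(|∇u|^N + |u|^N) dx − ∫_{ℝ^N} F(u) dx. -/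
open MeasureTheory Real Filter

private lemma key_pointwise (N : ℕ) (hN : 2 ≤ N)
    (f : ℝ → ℝ) (hf : Continuous f) (hf0 : ∀ s ≤ (0 : ℝ), f s = 0)
    (hmono : StrictMonoOn (fun s : ℝ => f s / s ^ (N - 1)) (Set.Ioi 0))
    (s : ℝ) (hs : 0 ≤ s) (t : ℝ) (ht : 0 ≤ t) :
    t ^ N / (N : ℝ) * (f s * s) - (∫ τ in (0 : ℝ)..(t * s), f τ)
      ≤ 1 / (N : ℝ) * (f s * s) - (∫ τ in (0 : ℝ)..s, f τ) := by
  have hN0 : (N : ℝ) ≠ 0 := by positivity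
  rcases eq_or_lt_of_le hs with hs0 | hs0
  · simp [← hs0, hf0 0 le_rfl]
  -- s > 0
  set h : ℝ → ℝ := fun r => r ^ N / (N : ℝ) * (f s * s) - (∫ τ in (0 : ℝ)..(r * s), f τ)
    with hh
  have hderiv : ∀ r : ℝ, HasDerivAt h (r ^ (N - 1) * (f s * s) - f (r * s) * s) r := by
    intro r
    have h1 : HasDerivAt (fun r : ℝ => r ^ N / (N : ℝ) * (f s * s))
        (r ^ (N - 1) * (f s * s)) r := by
      have := (hasDerivAt_pow N r).div_const (N : ℝ)
      have := this.mul_const (f s * s)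
      rw [mul_div_cancel_left₀ _ hN0] at this
      exact this
    have h2 : HasDerivAt (fun r : ℝ => ∫ τ in (0 : ℝ)..(r * s), f τ) (f (r * s) * s) r := by
      have hG : HasDerivAt (fun y : ℝ => ∫ τ in (0 : ℝ)..y, f τ) (f (r * s)) (r * s) :=
        intervalIntegral.integral_hasDerivAt_right (hf.intervalIntegrable _ _)
          (hf.stronglyMeasurableAtFilter _ _) hf.continuousAt
      exact hG.comp r (hasDerivAt_mul_const s)
    exact h1.sub h2
  have hmono' := hmono.monotoneOn
  -- derivative sign
  have hker : ∀ r : ℝ, 0 < r → r ≤ 1 → 0 ≤ r ^ (N - 1) * (f s * s) - f (r * s) * s := by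
    intro r hr hr1
    have hrs : r * s ∈ Set.Ioi (0:ℝ) := by exact mul_pos hr hs0
    have hle : r * s ≤ s := by nlinarith
    have := hmono' hrs (Set.mem_Ioi.mpr hs0) hle
    simp only at this
    have hsp : (0:ℝ) < s ^ (N-1) := by positivity
    have hrp : (0:ℝ) < r ^ (N-1) := by positivity
    rw [div_le_div_iff₀ (by positivity) hsp] at this
    rw [mul_pow] at this
    nlinarith [this, hs0.le]
  have hker' : ∀ r : ℝ, 1 ≤ r → r ^ (N - 1) * (f s * s) - f (r * s) * s ≤ 0 := by
    intro r hr
    have hrpos : (0:ℝ) < r := lt_of_lt_of_le one_pos hr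
    have hrs : r * s ∈ Set.Ioi (0:ℝ) := mul_pos hrpos hs0
    have hle : s ≤ r * s := by nlinarith
    have := hmono' (Set.mem_Ioi.mpr hs0) hrs hle
    simp only at this
    have hsp : (0:ℝ) < s ^ (N-1) := by positivity
    have hrp : (0:ℝ) < r ^ (N-1) := by positivity
    rw [div_le_div_iff₀ hsp (by positivity)] at this
    rw [mul_pow] at this
    nlinarith [this, hs0.le]
  have hdh : ∀ r : ℝ, deriv h r = r ^ (N - 1) * (f s * s) - f (r * s) * s :=
    fun r => (hderiv r).deriv
  have hcont : Continuous h := by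
    have := fun r => (hderiv r).differentiableAt
    exact (Differentiable.continuous this)
  rcases le_total t 1 with ht1 | ht1
  · -- monotone on [0,1]
    have hm : MonotoneOn h (Set.Icc 0 1) := by
      apply monotoneOn_of_deriv_nonneg (convex_Icc 0 1) hcont.continuousOn
        (fun x _ => ((hderiv x).differentiableAt).differentiableWithinAt)
      intro x hx
      rw [interior_Icc] at hx
      rw [hdh]
      exact hker x hx.1 hx.2.le
    have := hm (Set.mem_Icc.mpr ⟨ht, ht1⟩) (Set.mem_Icc.mpr ⟨zero_le_one, le_rfl⟩) ht1
    simpa [hh, one_mul] using this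
  · -- antitone on [1,∞)
    have hm : AntitoneOn h (Set.Ici 1) := by
      apply antitoneOn_of_deriv_nonpos (convex_Ici 1) hcont.continuousOn
        (fun x _ => ((hderiv x).differentiableAt).differentiableWithinAt)
      intro x hx
      rw [interior_Ici] at hx
      rw [hdh]
      exact hker' x (le_of_lt hx)
    have := hm (Set.mem_Ici.mpr le_rfl) (Set.mem_Ici.mpr ht1) ht1
    simpa [hh, one_mul] using this

theorem nehari_maximizes_along_rays (N : ℕ) (hN : 2 ≤ N)
    (f : ℝ → ℝ) (hf : Continuous f) (hf0 : ∀ s ≤ (0 : ℝ), f s = 0)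
    (hmono : StrictMonoOn (fun s : ℝ => f s / s ^ (N - 1)) (Set.Ioi 0))
    (u : EuclideanSpace ℝ (Fin N) → ℝ) (hu : ContDiff ℝ (⊤ : ℕ∞) u)
    (hcs : HasCompactSupport u) (hpos : ∀ x, 0 ≤ u x) (hne : u ≠ 0)
    (hNehari : (∫ x, (‖fderiv ℝ u x‖ ^ N + |u x| ^ N)) = ∫ x, f (u x) * u x) :
    ∀ t ≥ (0 : ℝ),
      t ^ N / (N : ℝ) * (∫ x, (‖fderiv ℝ u x‖ ^ N + |u x| ^ N)) -
          (∫ x, ∫ τ in (0 : ℝ)..(t * u x), f τ)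
        ≤ 1 / (N : ℝ) * (∫ x, (‖fderiv ℝ u x‖ ^ N + |u x| ^ N)) -
          (∫ x, ∫ τ in (0 : ℝ)..(u x), f τ) := by
  intro t ht
  rw [hNehari]
  set G : ℝ → ℝ := fun y => ∫ τ in (0 : ℝ)..y, f τ with hG
  have hGc : Continuous G :=
    intervalIntegral.continuous_primitive (fun a b => hf.intervalIntegrable a b) 0
  have hG0 : G 0 = 0 := by simp [hG]
  have huc : Continuous u := hu.continuous
  -- integrability of x ↦ f (u x) * u x
  have hI1 : Integrable (fun x => f (u x) * u x) :=
    ((hf.comp huc).mul huc).integrable_of_hasCompactSupport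
      (HasCompactSupport.comp_left (g := fun y => f y * y) hcs (by simp))
  -- integrability of x ↦ G (c * u x)
  have hI2 : ∀ c : ℝ, Integrable (fun x => G (c * u x)) := fun c =>
    (hGc.comp (continuous_const.mul huc)).integrable_of_hasCompactSupport
      (HasCompactSupport.comp_left (g := fun y => G (c * y)) hcs (by simp [hG0]))
  have key : ∀ x, t ^ N / (N : ℝ) * (f (u x) * u x) - G (t * u x)
      ≤ 1 / (N : ℝ) * (f (u x) * u x) - G (u x) := by
    intro x
    have := key_pointwise N hN f hf hf0 hmono (u x) (hpos x) t ht
    simpa [hG] using this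
  have hint : (∫ x, (t ^ N / (N : ℝ) * (f (u x) * u x) - G (t * u x)))
      ≤ ∫ x, (1 / (N : ℝ) * (f (u x) * u x) - G (u x)) := by
    apply integral_mono ((hI1.const_mul _).sub (hI2 t))
      ((hI1.const_mul _).sub (by simpa using hI2 1)) key
  have e1 : (∫ x, (t ^ N / (N : ℝ) * (f (u x) * u x) - G (t * u x)))
      = t ^ N / (N : ℝ) * (∫ x, f (u x) * u x) - ∫ x, G (t * u x) := by
    rw [integral_sub (hI1.const_mul _) (hI2 t), integral_const_mul]
  have e2 : (∫ x, (1 / (N : ℝ) * (f (u x) * u x) - G (u x)))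
      = 1 / (N : ℝ) * (∫ x, f (u x) * u x) - ∫ x, G (u x) := by
    rw [integral_sub (hI1.const_mul _) (by simpa using hI2 1), integral_const_mul]
  rw [e1, e2] at hint
  exact hint
end
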